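/- arXiv:1212.1877 — 4 statements merged into one kernel-verified Lean document; each statement's English description precedes it below -/
import Mathlib

section
/- The excess growth rate is numéraire invariant: for any portfolios π and ρ, γ*_π = (1/2)(Σ_{i=1}^n π_i a^ρ_ii − π' a^ρ π), where a^ρ_ij := a_ij − [aρ]_i − [aρ]_j + ρ'aρ is the covariance of log prices relative to numéraire V^ρ. -/
open Matrix

/-- The excess growth rate is numéraire invariant: for any
portfolios `π`, `ρ` (weights summing to one),
`γ*_π = (1/2)(Σᵢ πᵢ a^ρ_ii − π' a^ρ π)` where
`a^ρ_ij := a_ij − [aρ]_i − [aρ]_j + ρ'aρ`. -/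
theorem excess_growth_numeraire_invariant
    (n : ℕ) (a : Matrix (Fin n) (Fin n) ℝ) (π ρ : Fin n → ℝ)
    (hπ : ∑ i, π i = 1) (hρ : ∑ i, ρ i = 1)
    (aρ : Matrix (Fin n) (Fin n) ℝ)
    (haρ : ∀ i j, aρ i j = a i j - a.mulVec ρ i - a.mulVec ρ j + ρ ⬝ᵥ a.mulVec ρ) :
    (1/2) * ((∑ i, π i * a i i) - π ⬝ᵥ a.mulVec π)
      = (1/2) * ((∑ i, π i * aρ i i) - π ⬝ᵥ aρ.mulVec π) := by
  set b : Fin n → ℝ := a.mulVec ρ with hb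
  set c : ℝ := ρ ⬝ᵥ a.mulVec ρ with hc
  have h1 : ∑ i, π i * aρ i i = (∑ i, π i * a i i) - 2 * (∑ i, π i * b i) + c := by
    simp only [haρ]
    rw [Finset.sum_congr rfl (fun i _ => by ring :
      ∀ i ∈ Finset.univ, π i * (a i i - b i - b i + c)
        = π i * a i i - 2 * (π i * b i) + π i * c)]
    rw [Finset.sum_add_distrib, Finset.sum_sub_distrib, ← Finset.mul_sum,
      ← Finset.sum_mul, hπ]
    ring
  have h2 : π ⬝ᵥ aρ.mulVec π = (π ⬝ᵥ a.mulVec π) - 2 * (∑ i, π i * b i) + c := by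
    simp only [dotProduct, mulVec, haρ]
    have : ∀ i, ∑ j, (a i j - b i - b j + c) * π j
        = (∑ j, a i j * π j) - b i - (∑ j, b j * π j) + c := by
      intro i
      rw [Finset.sum_congr rfl (fun j _ => by ring :
        ∀ j ∈ Finset.univ, (a i j - b i - b j + c) * π j
          = a i j * π j - b i * π j - b j * π j + c * π j)]
      rw [Finset.sum_add_distrib, Finset.sum_sub_distrib, Finset.sum_sub_distrib,
        ← Finset.mul_sum, ← Finset.mul_sum, hπ]
      ring
    simp only [this]
    rw [Finset.sum_congr rfl (fun i _ => by ring :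
      ∀ i ∈ Finset.univ, π i * ((∑ j, a i j * π j) - b i - (∑ j, b j * π j) + c)
        = π i * (∑ j, a i j * π j) - π i * b i - π i * (∑ j, b j * π j) + π i * c)]
    rw [Finset.sum_add_distrib, Finset.sum_sub_distrib, Finset.sum_sub_distrib,
      ← Finset.sum_mul, ← Finset.sum_mul, hπ]
    have hsw : ∑ j, b j * π j = ∑ j, π j * b j := by
      exact Finset.sum_congr rfl (fun j _ => mul_comm _ _)
    rw [hsw]
    ring
  rw [h1, h2]
  ring
end

section
/- Gauge equivalence of ρ-generating functions: let s ∈ [0,∞)^n \ {0}, E_s^n := {y ∈ R^n : Σ_i s_i e^{y_i} = 1}, and let H₁, H₂ ∈ C²(U, R) on a neighborhood U ⊃ E_s^n. Then H₁ and H₂ generate the same portfolio weights π (via π = λρ + ∇H(y), λ = 1 − 1'∇H(y), with ρ_i = s_i e^{y_i}) at every point y ∈ E_s^n if and only if H₁ − H₂ is constant on E_s^n. -/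
/-!
The map `r x = x - log (∑ⱼ sⱼ e^{xⱼ}) 𝟙` retracts all of `ℝⁿ` onto `E` (it needs only one
`sⱼ > 0`), so `G = H₁ - H₂` is constant on `E` iff `G ∘ r` is constant on `ℝⁿ`, i.e. iff its
derivative vanishes everywhere. That derivative is `DG(r x)` composed with `v ↦ v - ⟨ρ(r x), v⟩ 𝟙`,
and `DG(y)` kills this projection exactly when `∇G(y) = (𝟙 ⬝ ∇G(y)) ρ(y)`, which is the equality of
the two portfolios at `y`.
-/

noncomputable section

variable {ι : Type*} [Fintype ι]

def expWeights (s y : ι → ℝ) : ι → ℝ := fun i => s i * Real.exp (y i)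

def expLevel (s : ι → ℝ) : Set (ι → ℝ) := {y | ∑ i, expWeights s y i = 1}

lemma mem_expLevel {s y : ι → ℝ} : y ∈ expLevel s ↔ ∑ i, expWeights s y i = 1 := Iff.rfl

def logNormalize (s x : ι → ℝ) : ι → ℝ :=
  fun i => x i - Real.log (∑ j, expWeights s x j)

/-- For `ρ = expWeights s y` with `y ∈ expLevel s`, the projection onto the tangent space of
`expLevel s` at `y` along `𝟙`. -/
def tangentProj (ρ : ι → ℝ) : (ι → ℝ) →L[ℝ] (ι → ℝ) :=
  ContinuousLinearMap.id ℝ _ -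
    (∑ j, ρ j • ContinuousLinearMap.proj (R := ℝ) (φ := fun _ : ι => ℝ) j).smulRight
      (1 : ι → ℝ)

@[simp]
lemma tangentProj_apply (ρ v : ι → ℝ) (i : ι) :
    tangentProj ρ v i = v i - ∑ j, ρ j * v j := by
  simp [tangentProj]

lemma sum_expWeights_pos {s : ι → ℝ} (hs : ∀ i, 0 ≤ s i) (hs0 : s ≠ 0) (x : ι → ℝ) :
    0 < ∑ i, expWeights s x i := by
  obtain ⟨k, hk⟩ : ∃ k, s k ≠ 0 := Function.ne_iff.mp hs0
  exact Finset.sum_pos' (fun i _ => mul_nonneg (hs i) (Real.exp_pos _).le)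
    ⟨k, Finset.mem_univ k, mul_pos ((hs k).lt_of_ne' hk) (Real.exp_pos _)⟩

lemma expWeights_logNormalize {s : ι → ℝ} (hs : ∀ i, 0 ≤ s i) (hs0 : s ≠ 0)
    (x : ι → ℝ) (i : ι) :
    expWeights s (logNormalize s x) i = expWeights s x i / ∑ j, expWeights s x j := by
  have hpos := sum_expWeights_pos hs hs0 x
  simp only [expWeights, logNormalize] at hpos ⊢
  rw [Real.exp_sub, Real.exp_log hpos, mul_div_assoc]

lemma logNormalize_mem_expLevel {s : ι → ℝ} (hs : ∀ i, 0 ≤ s i) (hs0 : s ≠ 0)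
    (x : ι → ℝ) : logNormalize s x ∈ expLevel s := by
  simp only [mem_expLevel, expWeights_logNormalize hs hs0, ← Finset.sum_div]
  exact div_self (sum_expWeights_pos hs hs0 x).ne'

lemma logNormalize_eq_self {s y : ι → ℝ} (hy : y ∈ expLevel s) : logNormalize s y = y := by
  funext i
  simp [logNormalize, mem_expLevel.mp hy]

lemma hasFDerivAt_logNormalize {s : ι → ℝ} (hs : ∀ i, 0 ≤ s i) (hs0 : s ≠ 0)
    (x : ι → ℝ) :
    HasFDerivAt (logNormalize s) (tangentProj (expWeights s (logNormalize s x))) x := by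
  have hsum : HasFDerivAt (fun x => ∑ j, expWeights s x j)
      (∑ j, s j • Real.exp (x j) • ContinuousLinearMap.proj j) x :=
    HasFDerivAt.fun_sum fun j _ => ((hasFDerivAt_apply j x).exp).const_mul (s j)
  refine hasFDerivAt_pi'' fun i => ?_
  convert (hasFDerivAt_apply i x).sub (hsum.log (sum_expWeights_pos hs hs0 x).ne') using 1
  · rfl
  ext v
  simp only [ContinuousLinearMap.comp_apply, ContinuousLinearMap.proj_apply, tangentProj_apply,
    expWeights_logNormalize hs hs0, sub_apply, smul_apply, FunLike.coe_sum, Finset.sum_apply,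
    smul_eq_mul, Finset.mul_sum]
  congr 1
  exact Finset.sum_congr rfl fun j _ => by simp only [expWeights]; ring

theorem exists_const_on_expLevel_iff {s : ι → ℝ} (hs : ∀ i, 0 ≤ s i) (hs0 : s ≠ 0)
    {G : (ι → ℝ) → ℝ} {G' : (ι → ℝ) → (ι → ℝ) →L[ℝ] ℝ}
    (hG : ∀ y ∈ expLevel s, HasFDerivAt G (G' y) y) :
    (∃ c, ∀ y ∈ expLevel s, G y = c) ↔
      ∀ y ∈ expLevel s, G' y ∘L tangentProj (expWeights s y) = 0 := by
  have hcomp : ∀ x, HasFDerivAt (G ∘ logNormalize s)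
      (G' (logNormalize s x) ∘L tangentProj (expWeights s (logNormalize s x))) x := fun x =>
    (hG _ (logNormalize_mem_expLevel hs hs0 x)).comp x (hasFDerivAt_logNormalize hs hs0 x)
  constructor
  · rintro ⟨c, hc⟩ y hy
    have hconst : G ∘ logNormalize s = fun _ => c :=
      funext fun x => hc _ (logNormalize_mem_expLevel hs hs0 x)
    have hderiv := hcomp y
    rw [hconst, logNormalize_eq_self hy] at hderiv
    exact hderiv.unique (hasFDerivAt_const c y)
  · intro h
    refine ⟨G (logNormalize s 0), fun y hy => ?_⟩
    have hzero : ∀ x, fderiv ℝ (G ∘ logNormalize s) x = 0 := fun x =>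
      (hcomp x).fderiv.trans (h _ (logNormalize_mem_expLevel hs hs0 x))
    have := is_const_of_fderiv_eq_zero (fun x => (hcomp x).differentiableAt) hzero y 0
    rwa [Function.comp_apply, logNormalize_eq_self hy] at this

variable [DecidableEq ι]

lemma apply_eq_sum_mul_apply_single (L : (ι → ℝ) →L[ℝ] ℝ) (v : ι → ℝ) :
    L v = ∑ i, v i * L (Pi.single i 1) := by
  conv_lhs => rw [pi_eq_sum_univ' v]
  simp only [map_sum, map_smul, smul_eq_mul]

lemma comp_tangentProj_eq_zero_iff (L : (ι → ℝ) →L[ℝ] ℝ) (ρ : ι → ℝ) :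
    L ∘L tangentProj ρ = 0 ↔ ∀ i, L (Pi.single i 1) = (∑ j, L (Pi.single j 1)) * ρ i := by
  have hT : ∀ v, L (tangentProj ρ v) = L v - (∑ j, ρ j * v j) * ∑ j, L (Pi.single j 1) := by
    intro v
    have hproj : tangentProj ρ v = v - (∑ j, ρ j * v j) • (1 : ι → ℝ) := by
      ext i; simp
    rw [hproj, map_sub, map_smul, smul_eq_mul, apply_eq_sum_mul_apply_single L 1]
    simp
  constructor
  · intro h i
    have := hT (Pi.single i 1)
    rw [← ContinuousLinearMap.comp_apply, h] at this
    simp only [zero_apply, Pi.single_apply, mul_ite, mul_one, mul_zero, Finset.sum_ite_eq',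
      Finset.mem_univ, ↓reduceIte] at this
    linarith
  · intro h
    refine ContinuousLinearMap.ext fun v => ?_
    rw [ContinuousLinearMap.comp_apply, hT, apply_eq_sum_mul_apply_single L v]
    set A := ∑ j, L (Pi.single j 1)
    simp only [h, zero_apply, Finset.sum_mul]
    exact sub_eq_zero.mpr (Finset.sum_congr rfl fun i _ => by ring)

end

theorem gauge_equivalence_of_generating_functions_general
    (n : ℕ)
    (s : Fin n → ℝ) (hs : ∀ i, 0 ≤ s i) (hs0 : s ≠ 0)
    (E : Set (Fin n → ℝ)) (hE : E = {y | ∑ i, s i * Real.exp (y i) = 1})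
    (U : Set (Fin n → ℝ)) (hU : IsOpen U) (hUE : E ⊆ U)
    (H₁ H₂ : (Fin n → ℝ) → ℝ)
    (h1 : ContDiffOn ℝ 2 H₁ U) (h2 : ContDiffOn ℝ 2 H₂ U) :
    (∀ y ∈ E, ∀ i : Fin n,
        (1 - ∑ j, fderiv ℝ H₁ y (Pi.single j 1)) * (s i * Real.exp (y i))
            + fderiv ℝ H₁ y (Pi.single i 1)
          = (1 - ∑ j, fderiv ℝ H₂ y (Pi.single j 1)) * (s i * Real.exp (y i))
            + fderiv ℝ H₂ y (Pi.single i 1))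
      ↔ ∃ c : ℝ, ∀ y ∈ E, H₁ y - H₂ y = c := by
  have hdiff : ∀ {H : (Fin n → ℝ) → ℝ}, ContDiffOn ℝ 2 H U →
      ∀ y ∈ E, HasFDerivAt H (fderiv ℝ H y) y :=
    fun hH y hy => ((hH.differentiableOn two_ne_zero).differentiableAt
      (hU.mem_nhds (hUE hy))).hasFDerivAt
  obtain rfl : E = expLevel s := hE
  rw [exists_const_on_expLevel_iff hs hs0 fun y hy => (hdiff h1 y hy).fun_sub (hdiff h2 y hy)]
  refine forall₂_congr fun y _ => ?_
  rw [comp_tangentProj_eq_zero_iff]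
  refine forall_congr' fun i => ?_
  simp only [sub_apply, Finset.sum_sub_distrib, expWeights]
  constructor <;> intro h <;> linear_combination h

/-- Gauge equivalence of `ρ`-generating functions: let
`s ∈ [0,∞)ⁿ \ {0}`, `E := {y : Σᵢ sᵢ e^{yᵢ} = 1}`, and `H₁, H₂ ∈ C²(U, ℝ)` on a
neighborhood `U ⊇ E`. Then `H₁` and `H₂` generate the same portfolio weights
`πᵢ = (1 − Σⱼ DⱼH)ρᵢ + DᵢH`, with `ρᵢ(y) = sᵢ e^{yᵢ}`, at every `y ∈ E` if and
only if `H₁ − H₂` is constant on `E`. -/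
theorem gauge_equivalence_of_generating_functions
    (n : ℕ) (hn : 0 < n)
    (s : Fin n → ℝ) (hs : ∀ i, 0 ≤ s i) (hs0 : s ≠ 0)
    (E : Set (Fin n → ℝ)) (hE : E = {y | ∑ i, s i * Real.exp (y i) = 1})
    (U : Set (Fin n → ℝ)) (hU : IsOpen U) (hUE : E ⊆ U)
    (H₁ H₂ : (Fin n → ℝ) → ℝ)
    (h1 : ContDiffOn ℝ 2 H₁ U) (h2 : ContDiffOn ℝ 2 H₂ U) :
    (∀ y ∈ E, ∀ i : Fin n,
        (1 - ∑ j, fderiv ℝ H₁ y (Pi.single j 1)) * (s i * Real.exp (y i))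
            + fderiv ℝ H₁ y (Pi.single i 1)
          = (1 - ∑ j, fderiv ℝ H₂ y (Pi.single j 1)) * (s i * Real.exp (y i))
            + fderiv ℝ H₂ y (Pi.single i 1))
      ↔ ∃ c : ℝ, ∀ y ∈ E, H₁ y - H₂ y = c :=
  gauge_equivalence_of_generating_functions_general n s hs hs0 E hE U hU hUE H₁ H₂ h1 h2
end

section
/- If H generates the portfolio π with respect to the passive numéraire with shares s, then for any f ∈ C²((0,∞), R), the function H_f(y) := f(Σ_{i=1}^n s_i e^{y_i}) + H(y) generates the same portfolio π at every point of E_s^n. -/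
/-!
Adding `f ∘ S`, with `S y = ∑ᵢ sᵢ e^{yᵢ}`, to a generating function changes its gradient by
`f'(S y) · ∇S(y) = f'(1) · ρ(y)` on `E_s^n`. Since `∑ᵢ ρᵢ(y) = 1` there, this shifts `∑ⱼ DⱼG` by
exactly `f'(1)`, and the two changes cancel in `(1 − ∑ⱼ DⱼG) ρᵢ + DᵢG`.
-/

open Real

variable {ι : Type*} [Fintype ι]

theorem hasFDerivAt_sum_mul_exp (s y : ι → ℝ) :
    HasFDerivAt (fun z : ι → ℝ => ∑ i, s i * exp (z i))
      (∑ i, (s i * exp (y i)) • ContinuousLinearMap.proj (R := ℝ) (φ := fun _ : ι => ℝ) i) y := by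
  refine HasFDerivAt.fun_sum fun i _ => ?_
  have h := ((hasDerivAt_exp (y i)).comp_hasFDerivAt y
    (ContinuousLinearMap.proj (R := ℝ) (φ := fun _ : ι => ℝ) i).hasFDerivAt).const_mul (s i)
  rwa [smul_smul] at h

variable [DecidableEq ι]

theorem sum_smul_proj_apply_single (a : ι → ℝ) (j : ι) :
    (∑ i, a i • ContinuousLinearMap.proj (R := ℝ) (φ := fun _ : ι => ℝ) i) (Pi.single j 1) =
      a j := by
  simp [Pi.single_apply]

/-- The portfolio generated by `G` at `y`, with `φ = DG(y)` and `ρ = ρ(y)`. -/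
def portfolioOfDifferential (ρ : ι → ℝ) (φ : (ι → ℝ) →L[ℝ] ℝ) (i : ι) : ℝ :=
  (1 - ∑ j, φ (Pi.single j 1)) * ρ i + φ (Pi.single i 1)

theorem portfolioOfDifferential_add_smul {ρ : ι → ℝ} (hρ : ∑ j, ρ j = 1)
    (φ ψ : (ι → ℝ) →L[ℝ] ℝ) (hψ : ∀ j, ψ (Pi.single j 1) = ρ j) (c : ℝ) :
    portfolioOfDifferential ρ (φ + c • ψ) = portfolioOfDifferential ρ φ := by
  funext i
  simp only [portfolioOfDifferential, add_apply, smul_apply, hψ, smul_eq_mul,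
    Finset.sum_add_distrib, ← Finset.mul_sum, hρ]
  ring

theorem gauge_freedom_of_generating_functions_general
    (n : ℕ)
    (s : Fin n → ℝ)
    (E : Set (Fin n → ℝ)) (hE : E = {y | ∑ i, s i * Real.exp (y i) = 1})
    (U : Set (Fin n → ℝ)) (hU : IsOpen U) (hUE : E ⊆ U)
    (H : (Fin n → ℝ) → ℝ) (hH : ContDiffOn ℝ 2 H U)
    (f : ℝ → ℝ) (hf : ContDiffOn ℝ 2 f (Set.Ioi 0))
    (Hf : (Fin n → ℝ) → ℝ)
    (hHf : ∀ y, Hf y = f (∑ i, s i * Real.exp (y i)) + H y) :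
    ∀ y ∈ E, ∀ i : Fin n,
      (1 - ∑ j, fderiv ℝ Hf y (Pi.single j 1)) * (s i * Real.exp (y i))
          + fderiv ℝ Hf y (Pi.single i 1)
        = (1 - ∑ j, fderiv ℝ H y (Pi.single j 1)) * (s i * Real.exp (y i))
          + fderiv ℝ H y (Pi.single i 1) := by
  intro y hy i
  have hyE : ∑ i, s i * exp (y i) = 1 := by rwa [hE] at hy
  have hH' : HasFDerivAt H (fderiv ℝ H y) y :=
    ((hH.differentiableOn two_ne_zero).differentiableAt (hU.mem_nhds (hUE hy))).hasFDerivAt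
  have hf' : HasDerivAt f (deriv f 1) (∑ i, s i * exp (y i)) := by
    rw [hyE]
    exact ((hf.differentiableOn two_ne_zero).differentiableAt
      (isOpen_Ioi.mem_nhds (Set.mem_Ioi.mpr one_pos))).hasDerivAt
  have hHf' : HasFDerivAt Hf _ y :=
    (hH'.add (hf'.comp_hasFDerivAt y (hasFDerivAt_sum_mul_exp s y))).congr_of_eventuallyEq
      (.of_forall fun z => (hHf z).trans (add_comm _ _))
  have key := congr_fun (portfolioOfDifferential_add_smul hyE (fderiv ℝ H y) _
    (sum_smul_proj_apply_single _) (deriv f 1)) i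
  rwa [← hHf'.fderiv] at key

/-- If `H` generates the portfolio `π` with respect to the passive
numéraire with shares `s`, then for any `f ∈ C²((0,∞), ℝ)` the function
`H_f(y) := f(Σᵢ sᵢ e^{yᵢ}) + H(y)` generates the same portfolio at every point of
`E_s^n = {y : Σᵢ sᵢ e^{yᵢ} = 1}`, where the portfolio generated by `G` at `y` is
`πᵢ = (1 − Σⱼ DⱼG(y)) ρᵢ(y) + DᵢG(y)` with `ρᵢ(y) = sᵢ e^{yᵢ}`. -/
theorem gauge_freedom_of_generating_functions
    (n : ℕ)
    (s : Fin n → ℝ) (hs : ∀ i, 0 ≤ s i) (hs0 : s ≠ 0)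
    (E : Set (Fin n → ℝ)) (hE : E = {y | ∑ i, s i * Real.exp (y i) = 1})
    (U : Set (Fin n → ℝ)) (hU : IsOpen U) (hUE : E ⊆ U)
    (H : (Fin n → ℝ) → ℝ) (hH : ContDiffOn ℝ 2 H U)
    (f : ℝ → ℝ) (hf : ContDiffOn ℝ 2 f (Set.Ioi 0))
    (Hf : (Fin n → ℝ) → ℝ)
    (hHf : ∀ y, Hf y = f (∑ i, s i * Real.exp (y i)) + H y) :
    ∀ y ∈ E, ∀ i : Fin n,
      (1 - ∑ j, fderiv ℝ Hf y (Pi.single j 1)) * (s i * Real.exp (y i))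
          + fderiv ℝ Hf y (Pi.single i 1)
        = (1 - ∑ j, fderiv ℝ H y (Pi.single j 1)) * (s i * Real.exp (y i))
          + fderiv ℝ H y (Pi.single i 1) :=
  gauge_freedom_of_generating_functions_general n s E hE U hU hUE H hH f hf Hf hHf
end

section
/- If the covariance process a is uniformly elliptic (y'a_t y ≥ u‖y‖² for some u > 0, all y, t) and p ∈ R^n has p_i > 0 for all i and Σ_i p_i = 1, then the excess growth rate satisfies γ*_{p,t} = (1/2)(Σ_i p_i a_{ii,t} − p'a_t p) ≥ (u/2)(1 − max_i p_i) > 0 for all t. -/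
/-!
Writing `eᵢ` for the `i`-th basis vector, the excess growth rate is an average of quadratic forms:
`Σᵢ pᵢ aᵢᵢ - p'ap = Σᵢ pᵢ (eᵢ - p)'a(eᵢ - p)`. Ellipticity bounds each term below by
`u ‖eᵢ - p‖²`, and the same identity for the identity matrix gives `Σᵢ pᵢ ‖eᵢ - p‖² = 1 - ‖p‖²`.
Finally `‖p‖² = Σᵢ pᵢ pᵢ ≤ maxᵢ pᵢ`, and `maxᵢ pᵢ < 1` once there are two positive weights.
-/

open Matrix

section Identity

variable {ι R : Type*} [Fintype ι] [DecidableEq ι] [CommRing R]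

theorem sum_mul_dotProduct_mulVec_single_sub (A : Matrix ι ι R) {p : ι → R}
    (hp : ∑ i, p i = 1) :
    ∑ i, p i * ((Pi.single i 1 - p) ⬝ᵥ A *ᵥ (Pi.single i 1 - p))
      = ∑ i, p i * A i i - p ⬝ᵥ A *ᵥ p := by
  have hterm : ∀ i, (Pi.single i 1 - p) ⬝ᵥ A *ᵥ (Pi.single i 1 - p)
      = A i i - (A *ᵥ p) i - (p ᵥ* A) i + p ⬝ᵥ A *ᵥ p := by
    intro i
    simp only [mulVec_sub, dotProduct_sub, sub_dotProduct, mulVec_single_one,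
      single_one_dotProduct, col_apply]
    rw [dotProduct_mulVec, show p ⬝ᵥ A.col i = (p ᵥ* A) i from rfl]
    ring
  have hleft : ∑ i, p i * (A *ᵥ p) i = p ⬝ᵥ A *ᵥ p := rfl
  have hright : ∑ i, p i * (p ᵥ* A) i = p ⬝ᵥ A *ᵥ p := by
    rw [dotProduct_mulVec, dotProduct_comm]; rfl
  simp only [hterm, mul_add, mul_sub, Finset.sum_add_distrib, Finset.sum_sub_distrib, hleft, hright,
    ← Finset.sum_mul, hp]
  ring

theorem sum_mul_sum_sq_single_sub {p : ι → R} (hp : ∑ i, p i = 1) :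
    ∑ i, p i * ∑ k, (Pi.single i 1 - p : ι → R) k ^ 2 = 1 - ∑ i, p i ^ 2 := by
  simpa [one_mulVec, dotProduct, sq, hp] using sum_mul_dotProduct_mulVec_single_sub 1 hp

end Identity

section Weights

variable {ι : Type*} [Fintype ι]

theorem sum_sq_le_iSup {p : ι → ℝ} (hp0 : ∀ i, 0 ≤ p i) (hp : ∑ i, p i = 1) :
    ∑ i, p i ^ 2 ≤ ⨆ i, p i :=
  calc ∑ i, p i ^ 2 ≤ ∑ i, p i * ⨆ j, p j :=
        Finset.sum_le_sum fun i _ => by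
          rw [sq]
          exact mul_le_mul_of_nonneg_left (le_ciSup (Finite.bddAbove_range p) i) (hp0 i)
    _ = ⨆ i, p i := by rw [← Finset.sum_mul, hp, one_mul]

theorem iSup_lt_one [Nontrivial ι] {p : ι → ℝ} (hp0 : ∀ i, 0 < p i) (hp : ∑ i, p i = 1) :
    ⨆ i, p i < 1 := by
  obtain ⟨i, hi⟩ := exists_eq_ciSup_of_finite (f := p)
  obtain ⟨j, hj⟩ := exists_ne i
  rw [← hi, ← hp]
  exact Finset.single_lt_sum hj (Finset.mem_univ _) (Finset.mem_univ _) (hp0 j)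
    fun k _ _ => (hp0 k).le

end Weights

theorem mul_one_sub_sum_sq_le_excessGrowth {ι : Type*} [Fintype ι] [DecidableEq ι]
    {A : Matrix ι ι ℝ} {u : ℝ} (hell : ∀ y : ι → ℝ, u * ∑ i, y i ^ 2 ≤ y ⬝ᵥ A *ᵥ y)
    {p : ι → ℝ} (hp0 : ∀ i, 0 ≤ p i) (hp : ∑ i, p i = 1) :
    u * (1 - ∑ i, p i ^ 2) ≤ ∑ i, p i * A i i - p ⬝ᵥ A *ᵥ p :=
  calc u * (1 - ∑ i, p i ^ 2) = ∑ i, p i * (u * ∑ k, (Pi.single i 1 - p : ι → ℝ) k ^ 2) := by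
        rw [← sum_mul_sum_sq_single_sub hp, Finset.mul_sum]
        exact Finset.sum_congr rfl fun i _ => by ring
    _ ≤ ∑ i, p i * ((Pi.single i 1 - p) ⬝ᵥ A *ᵥ (Pi.single i 1 - p)) :=
        Finset.sum_le_sum fun i _ => mul_le_mul_of_nonneg_left (hell _) (hp0 i)
    _ = ∑ i, p i * A i i - p ⬝ᵥ A *ᵥ p := sum_mul_dotProduct_mulVec_single_sub A hp

theorem excess_growth_uniform_ellipticity_bound_general
    (n : ℕ) (hn : 1 < n)
    (a : ℝ → Matrix (Fin n) (Fin n) ℝ)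
    (u : ℝ) (hu : 0 < u)
    (hell : ∀ (t : ℝ) (y : Fin n → ℝ), u * ∑ i, (y i) ^ 2 ≤ y ⬝ᵥ (a t).mulVec y)
    (p : Fin n → ℝ) (hp : ∀ i, 0 < p i) (hpsum : ∑ i, p i = 1) :
    ∀ t : ℝ,
      (u / 2) * (1 - ⨆ i, p i)
          ≤ (1/2) * ((∑ i, p i * a t i i) - p ⬝ᵥ (a t).mulVec p)
        ∧ 0 < (u / 2) * (1 - ⨆ i, p i) := by
  have : Nontrivial (Fin n) := Fin.nontrivial_iff_two_le.mpr hn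
  have hmax_lt : ⨆ i, p i < 1 := iSup_lt_one hp hpsum
  have hsq_le : ∑ i, p i ^ 2 ≤ ⨆ i, p i := sum_sq_le_iSup (fun i => (hp i).le) hpsum
  intro t
  have hbound := mul_one_sub_sum_sq_le_excessGrowth (hell t) (fun i => (hp i).le) hpsum
  have hmono : u * (1 - ⨆ i, p i) ≤ u * (1 - ∑ i, p i ^ 2) :=
    mul_le_mul_of_nonneg_left (by linarith) hu.le
  exact ⟨by linarith, mul_pos (half_pos hu) (sub_pos.2 hmax_lt)⟩

/-- If the covariance process `a` is uniformly elliptic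
(`y'a_t y ≥ u‖y‖²` for some `u > 0`) and `p` is a strictly positive probability
vector (on at least two assets), then the excess growth rate satisfies
`γ*_{p,t} = (1/2)(Σᵢ pᵢ a_{ii,t} − p'a_t p) ≥ (u/2)(1 − maxᵢ pᵢ) > 0` for all `t`. -/
theorem excess_growth_uniform_ellipticity_bound
    (n : ℕ) (hn : 1 < n)
    (a : ℝ → Matrix (Fin n) (Fin n) ℝ)
    (hsymm : ∀ t, (a t).IsSymm)
    (u : ℝ) (hu : 0 < u)
    (hell : ∀ (t : ℝ) (y : Fin n → ℝ), u * ∑ i, (y i) ^ 2 ≤ y ⬝ᵥ (a t).mulVec y)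
    (p : Fin n → ℝ) (hp : ∀ i, 0 < p i) (hpsum : ∑ i, p i = 1) :
    ∀ t : ℝ,
      (u / 2) * (1 - ⨆ i, p i)
          ≤ (1/2) * ((∑ i, p i * a t i i) - p ⬝ᵥ (a t).mulVec p)
        ∧ 0 < (u / 2) * (1 - ⨆ i, p i) :=
  excess_growth_uniform_ellipticity_bound_general n hn a u hu hell p hp hpsum
end
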